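/- If the poset P_𝓛 is pure, then every maximal chain of P_𝓛 has length Δ_1 + i_1 − 2; in particular, the rank of P_𝓛 equals Δ_1 + i_1 − 2, where Δ_1 = v_1 − u_1 and i_1 = min{ i ∈ [n] : ε_i > 1 }. -/

import Mathlib

/-!
Since `ε_k = 1` for `k < i1`, we have `u_k = k` for `k ≤ i1` and `u_k > k` for `k > i1`.
The elements `a_{i1,i1+1} < ⋯ < a_{2,3} < a_{1,2} < a_{1,3} < ⋯ < a_{1,v_1}` then form a chain
with `v_1 + i1 - 2` elements. It is maximal: an element `a_{i,j}` with `i ≥ 2` cannot lie above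
`a_{1,2}` (its first entry is `u_1`), and lying below it forces `j = i + 1` and `u_i = i`, hence
`i ≤ i1`. Purity transfers its size to every maximal chain, and since `P_𝓛` is finite every chain
extends to a maximal one.
-/

namespace LadderPaper

/-- The tuple `a_{i,j}`: entry `t` is `u t` for `t < i` and `max (j + (t - i)) (u t)` for
`t ≥ i` (indices `t ∈ [1,n]`; entries outside `[1,n]` are set to `0`). -/
def atuple (u : ℕ → ℤ) (n i : ℕ) (j : ℤ) : ℕ → ℤ := fun t =>
  if 1 ≤ t ∧ t ≤ n then
    (if t < i then u t else max (j + ((t : ℤ) - (i : ℤ))) (u t))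
  else 0

/-- The tuple `b_{i,j}`: like `a_{i,j}` but with `i`-th entry `j - 1`. -/
def btuple (u : ℕ → ℤ) (n i : ℕ) (j : ℤ) : ℕ → ℤ := fun t =>
  if 1 ≤ t ∧ t ≤ n then
    (if t < i then u t
     else if t = i then j - 1
     else max (j + ((t : ℤ) - (i : ℤ))) (u t))
  else 0

/-- The tuple `(u_1, …, u_n)`. -/
def utuple (u : ℕ → ℤ) (n : ℕ) : ℕ → ℤ := fun t =>
  if 1 ≤ t ∧ t ≤ n then u t else 0

/-- The lattice `𝓛` of tuples `c` with `u t ≤ c t ≤ v t` for `t ∈ [1,n]`, strictly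
increasing entries, and (normalization) `c t = 0` outside `[1,n]`.  It carries the
componentwise (induced product) order. -/
def ladderL (n : ℕ) (u v : ℕ → ℤ) : Set (ℕ → ℤ) :=
  {c | (∀ t, 1 ≤ t → t ≤ n → u t ≤ c t ∧ c t ≤ v t) ∧
       (∀ t, 1 ≤ t → t + 1 ≤ n → c t < c (t + 1)) ∧
       (∀ t, t = 0 ∨ n < t → c t = 0)}

/-- The set `P_𝓛 = { a_{i,j} : i ∈ [n], j ∈ [u_i + 1, v_i] }`. -/
def PL (n : ℕ) (u v : ℕ → ℤ) : Set (ℕ → ℤ) :=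
  {x | ∃ i : ℕ, ∃ j : ℤ, 1 ≤ i ∧ i ≤ n ∧ u i + 1 ≤ j ∧ j ≤ v i ∧ x = atuple u n i j}

/-- The product poset `𝓛 × [r]`. -/
def ladderLr (n : ℕ) (u v : ℕ → ℤ) (r : ℤ) : Set ((ℕ → ℤ) × ℤ) :=
  {p | p.1 ∈ ladderL n u v ∧ 1 ≤ p.2 ∧ p.2 ≤ r}

/-- The set `P_{𝓛×[r]} = { (a_{i,j}, 1) } ∪ { ((u_1,…,u_n), k) : k ∈ [2,r] }`. -/
def PLr (n : ℕ) (u v : ℕ → ℤ) (r : ℤ) : Set ((ℕ → ℤ) × ℤ) :=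
  {p | (p.1 ∈ PL n u v ∧ p.2 = 1) ∨ (p.1 = utuple u n ∧ 2 ≤ p.2 ∧ p.2 ≤ r)}

/-- `ε_i > 1`, with the convention `ε_n > 1` (i.e. `i = n` or `u_{i+1} - u_i > 1`). -/
def epsGt1 (u : ℕ → ℤ) (n i : ℕ) : Prop := i = n ∨ 1 < u (i + 1) - u i

/-- `θ_{i-1} > 1`, with the convention `θ_0 > 1` (i.e. `i = 1` or `v_i - v_{i-1} > 1`). -/
def thetaGt1 (v : ℕ → ℤ) (i : ℕ) : Prop := i = 1 ∨ 1 < v i - v (i - 1)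

/-- Membership in `C = { i ∈ [n-1] : v_i < u_{i+1} } ∪ { n }`. -/
def inC (n : ℕ) (u v : ℕ → ℤ) (i : ℕ) : Prop :=
  (1 ≤ i ∧ i + 1 ≤ n ∧ v i < u (i + 1)) ∨ i = n

/-- The set `C = { i ∈ [n-1] : v_i < u_{i+1} } ∪ { n }`. -/
def Cset (n : ℕ) (u v : ℕ → ℤ) : Set ℕ :=
  {i | 1 ≤ i ∧ i + 1 ≤ n ∧ v i < u (i + 1)} ∪ {n}

/-- `[p,q]` is one of the blocks `[p_s, q_s]` determined by `C`: `q ∈ C`,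
no element of `C` lies in `[p, q-1]`, and either `p = 1` or `p - 1 ∈ C`. -/
def IsBlock (n : ℕ) (u v : ℕ → ℤ) (p q : ℕ) : Prop :=
  1 ≤ p ∧ p ≤ q ∧ q ≤ n ∧ inC n u v q ∧
    (∀ j, p ≤ j → j < q → ¬ inC n u v j) ∧ (p = 1 ∨ inC n u v (p - 1))

/-- `i0 = min { i ∈ [p,q] : ε_i > 1 }` (with the convention `ε_n > 1`). -/
def IsBlockMin (n : ℕ) (u : ℕ → ℤ) (p q i0 : ℕ) : Prop :=
  p ≤ i0 ∧ i0 ≤ q ∧ epsGt1 u n i0 ∧ ∀ j, p ≤ j → j < i0 → ¬ epsGt1 u n j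

/-- The comparability graph of a poset: two distinct elements are adjacent
iff they are comparable. -/
def compGraph (α : Type*) [Preorder α] : SimpleGraph α where
  Adj x y := x ≠ y ∧ (x ≤ y ∨ y ≤ x)
  symm := ⟨fun x y h => ⟨Ne.symm h.1, Or.symm h.2⟩⟩
  loopless := ⟨fun x h => h.1 rfl⟩

/-- A poset is pure if all of its maximal chains have the same cardinality
(equivalently, the same length). -/
def IsPure (α : Type*) [Preorder α] : Prop :=
  ∀ A B : Set α, IsMaxChain (· ≤ ·) A → IsMaxChain (· ≤ ·) B → A.ncard = B.ncard

lemma atuple_apply {u : ℕ → ℤ} {n i t : ℕ} (j : ℤ) (h1 : 1 ≤ t) (h2 : t ≤ n) :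
    atuple u n i j t = if t < i then u t else max (j + ((t : ℤ) - (i : ℤ))) (u t) := by
  simp [atuple, h1, h2]

lemma atuple_le_atuple {u : ℕ → ℤ} {n k k' : ℕ} {j j' : ℤ}
    (hk : k' ≤ k) (h : j - k ≤ j' - k') : atuple u n k j ≤ atuple u n k' j' := by
  intro t
  simp only [atuple]
  split_ifs <;> omega

lemma atuple_lt_atuple {u : ℕ → ℤ} {n k k' : ℕ} {j j' : ℤ} (hk1 : 1 ≤ k') (hkn : k' ≤ n)
    (hk : k' ≤ k) (h : j - k ≤ j' - k') (hne : k' < k ∨ j < j') (hu : u k' < j') :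
    atuple u n k j < atuple u n k' j' := by
  refine Pi.lt_def.2 ⟨atuple_le_atuple hk h, k', ?_⟩
  rw [atuple_apply j hk1 hkn, atuple_apply j' hk1 hkn]
  split_ifs <;> omega

lemma finite_PL (n : ℕ) (u v : ℕ → ℤ) : (PL n u v).Finite := by
  refine ((Set.finite_Icc 1 n).biUnion fun i _ =>
    (Set.finite_Icc (u i + 1) (v i)).image (atuple u n i)).subset ?_
  rintro x ⟨i, j, h1, h2, h3, h4, rfl⟩
  simp only [Set.mem_iUnion]
  exact ⟨i, ⟨h1, h2⟩, j, ⟨h3, h4⟩, rfl⟩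

lemma IsPure.ncard_le_of_isMaxChain {α : Type*} [Preorder α] [Finite α] (hP : IsPure α)
    {A B : Set α} (hB : IsMaxChain (· ≤ ·) B) (hA : IsChain (· ≤ ·) A) : A.ncard ≤ B.ncard := by
  obtain ⟨M, hM, hAM⟩ := hA.exists_maxChain
  exact (Set.ncard_le_ncard hAM (Set.toFinite M)).trans (hP M B hM hB).le

lemma sub_le_sub_of_lt_succ {w : ℕ → ℤ} {n a b : ℕ}
    (hw : ∀ i, 1 ≤ i → i + 1 ≤ n → w i < w (i + 1)) (ha : 1 ≤ a) (hab : a ≤ b) (hb : b ≤ n) :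
    (b : ℤ) - a ≤ w b - w a := by
  induction b, hab using Nat.le_induction with
  | base => simp
  | succ k hak ih =>
    have := ih (by omega)
    have := hw k (by omega) hb
    push_cast
    omega

/-- For `s ≤ 0` this is `a_{1-s, 2-s}`, for `s ≥ 0` it is `a_{1, 2+s}`: on `[1 - i1, v 1 - 2]`
it runs through `a_{i1, i1+1} < ⋯ < a_{2,3} < a_{1,2} < a_{1,3} < ⋯ < a_{1, v 1}`. -/
def ladderChain (u : ℕ → ℤ) (n : ℕ) (s : ℤ) : ℕ → ℤ :=
  atuple u n (1 + (-s).toNat) (2 + |s|)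

def ladderChainSet (n : ℕ) (u v : ℕ → ℤ) (i1 : ℕ) : Set (PL n u v) :=
  Subtype.val ⁻¹' (ladderChain u n '' Set.Icc (1 - i1 : ℤ) (v 1 - 2))

section Ladder

variable {n i1 : ℕ} {u v : ℕ → ℤ}

lemma eq_self_of_not_epsGt1 (hu1 : u 1 = 1)
    (humono : ∀ i, 1 ≤ i → i + 1 ≤ n → u i < u (i + 1)) (hi1n : i1 ≤ n)
    (hi1min : ∀ j, 1 ≤ j → j < i1 → ¬ epsGt1 u n j) :
    ∀ k, 1 ≤ k → k ≤ i1 → u k = k := by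
  intro k hk hki
  induction k, hk using Nat.le_induction with
  | base => simp [hu1]
  | succ k hk ih =>
    have h1 := ih (by omega)
    have h2 := hi1min k hk (by omega)
    have h3 := humono k hk (by omega)
    simp only [epsGt1, not_or] at h2
    push_cast
    omega

lemma self_lt_of_epsGt1 (hu1 : u 1 = 1)
    (humono : ∀ i, 1 ≤ i → i + 1 ≤ n → u i < u (i + 1)) (hi11 : 1 ≤ i1)
    (hi1e : epsGt1 u n i1) : ∀ k, i1 < k → k ≤ n → (k : ℤ) < u k := by
  intro k hk hkn
  have h1 := sub_le_sub_of_lt_succ humono le_rfl hi11 (by omega)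
  have h2 := sub_le_sub_of_lt_succ (a := i1 + 1) humono (by omega) hk hkn
  have h3 : 1 < u (i1 + 1) - u i1 := hi1e.resolve_left (by omega)
  push_cast at h2
  omega

lemma ladderChain_strictMonoOn (hu_self : ∀ k, 1 ≤ k → k ≤ i1 → u k = k) (hi11 : 1 ≤ i1)
    (hi1n : i1 ≤ n) : StrictMonoOn (ladderChain u n) (Set.Ici (1 - i1 : ℤ)) := by
  intro s hs t ht hst
  simp only [Set.mem_Ici] at hs ht
  have hut := hu_self (1 + (-t).toNat) (by omega) (by omega)
  simp only [ladderChain, abs_eq_max_neg] at hut ⊢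
  apply atuple_lt_atuple <;> omega

lemma ladderChain_mem_PL (hu_self : ∀ k, 1 ≤ k → k ≤ i1 → u k = k)
    (huv : ∀ i, 1 ≤ i → i ≤ n → u i < v i) (hi11 : 1 ≤ i1) (hi1n : i1 ≤ n) {s : ℤ}
    (hs : s ∈ Set.Icc (1 - i1 : ℤ) (v 1 - 2)) : ladderChain u n s ∈ PL n u v := by
  obtain ⟨hs1, hs2⟩ := hs
  have hk := hu_self (1 + (-s).toNat) (by omega) (by omega)
  have hkv := huv (1 + (-s).toNat) (by omega) (by omega)
  refine ⟨1 + (-s).toNat, 2 + |s|, by omega, by omega, ?_, ?_, rfl⟩ <;> rw [abs_eq_max_neg]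
  · omega
  · rcases le_or_gt s 0 with h | h
    · omega
    · rw [show (-s).toNat = 0 by omega, Nat.add_zero]
      omega

lemma exists_ladderChain_eq (hn : 1 ≤ n) (hu_self : ∀ k, 1 ≤ k → k ≤ i1 → u k = k)
    (hlt_self : ∀ k, i1 < k → k ≤ n → (k : ℤ) < u k) (hi11 : 1 ≤ i1) (hv1 : u 1 < v 1)
    {x : ℕ → ℤ} (hx : x ∈ PL n u v) (hcomp : x ≤ atuple u n 1 2 ∨ atuple u n 1 2 ≤ x) :
    ∃ s ∈ Set.Icc (1 - i1 : ℤ) (v 1 - 2), ladderChain u n s = x := by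
  obtain ⟨i, j, hi1, hin, hj1, hj2, rfl⟩ := hx
  have hu1 := hu_self 1 le_rfl hi11
  rcases Nat.eq_or_lt_of_le hi1 with rfl | hi2
  · refine ⟨j - 2, ⟨by omega, by omega⟩, ?_⟩
    unfold ladderChain
    congr 1 <;> [omega; (rw [abs_eq_max_neg]; omega)]
  have hle : atuple u n i j ≤ atuple u n 1 2 := by
    refine hcomp.resolve_right fun h => ?_
    have h1 : atuple u n 1 2 1 ≤ atuple u n i j 1 := h 1
    rw [atuple_apply 2 le_rfl hn, atuple_apply j le_rfl hn] at h1
    split_ifs at h1 <;> omega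
  have hj : j ≤ i + 1 := by
    have hi : atuple u n i j i ≤ atuple u n 1 2 i := hle i
    rw [atuple_apply j hi1 hin, atuple_apply 2 hi1 hin] at hi
    split_ifs at hi <;> omega
  have hii1 : i ≤ i1 := by
    by_contra! h
    have := hlt_self i h hin
    omega
  have hui := hu_self i hi1 hii1
  refine ⟨1 - i, ⟨by omega, by omega⟩, ?_⟩
  unfold ladderChain
  congr 1 <;> [omega; (rw [abs_eq_max_neg]; omega)]

lemma isMaxChain_ladderChainSet (hn : 1 ≤ n) (hu_self : ∀ k, 1 ≤ k → k ≤ i1 → u k = k)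
    (hlt_self : ∀ k, i1 < k → k ≤ n → (k : ℤ) < u k) (huv : ∀ i, 1 ≤ i → i ≤ n → u i < v i)
    (hi11 : 1 ≤ i1) (hi1n : i1 ≤ n) : IsMaxChain (· ≤ ·) (ladderChainSet n u v i1) := by
  have hv1 := huv 1 le_rfl hn
  have hu1 := hu_self 1 le_rfl hi11
  have hmono : MonotoneOn (ladderChain u n) (Set.Icc (1 - i1 : ℤ) (v 1 - 2)) :=
    ((ladderChain_strictMonoOn hu_self hi11 hi1n).mono Set.Icc_subset_Ici_self).monotoneOn
  have hchain : IsChain (· ≤ ·) (ladderChain u n '' Set.Icc (1 - i1 : ℤ) (v 1 - 2)) := by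
    rintro _ ⟨s, hs, rfl⟩ _ ⟨t, ht, rfl⟩ -
    exact (le_total s t).imp (hmono hs ht) (hmono ht hs)
  refine ⟨hchain.preimage _ _ _ Subtype.val_injective fun _ _ h => h, fun B hB hAB => ?_⟩
  refine hAB.antisymm fun x hxB => ?_
  have hmem0 : (0 : ℤ) ∈ Set.Icc (1 - i1 : ℤ) (v 1 - 2) := ⟨by omega, by omega⟩
  set a12 : PL n u v := ⟨ladderChain u n 0, ladderChain_mem_PL hu_self huv hi11 hi1n hmem0⟩
  have ha12 : a12 ∈ ladderChainSet n u v i1 := ⟨0, hmem0, rfl⟩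
  by_cases hx : x = a12
  · exact hx ▸ ha12
  · exact exists_ladderChain_eq hn hu_self hlt_self hi11 hv1 x.2 (hB hxB (hAB ha12) hx)

lemma ncard_ladderChainSet (hu_self : ∀ k, 1 ≤ k → k ≤ i1 → u k = k)
    (huv : ∀ i, 1 ≤ i → i ≤ n → u i < v i) (hi11 : 1 ≤ i1) (hi1n : i1 ≤ n) :
    (ladderChainSet n u v i1).ncard = (v 1 + i1 - 2).toNat := by
  have himage : ladderChain u n '' Set.Icc (1 - i1 : ℤ) (v 1 - 2) ⊆
      Set.range (Subtype.val : PL n u v → ℕ → ℤ) := by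
    rw [Subtype.range_coe]
    rintro _ ⟨s, hs, rfl⟩
    exact ladderChain_mem_PL hu_self huv hi11 hi1n hs
  rw [ladderChainSet, Set.ncard_preimage_of_injective_subset_range Subtype.val_injective himage,
    ((ladderChain_strictMonoOn hu_self hi11 hi1n).mono Set.Icc_subset_Ici_self).injOn.ncard_image,
    ← Finset.coe_Icc, Set.ncard_coe_finset, Int.card_Icc]
  congr 1
  ring

end Ladder

theorem stmt18_general
    (n : ℕ) (u v : ℕ → ℤ)
    (hn : 1 ≤ n)
    (hu1 : u 1 = 1)
    (humono : ∀ i, 1 ≤ i → i + 1 ≤ n → u i < u (i + 1))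
    (huv : ∀ i, 1 ≤ i → i ≤ n → u i < v i)
    (i1 : ℕ) (hi11 : 1 ≤ i1) (hi1n : i1 ≤ n) (hi1e : epsGt1 u n i1)
    (hi1min : ∀ j, 1 ≤ j → j < i1 → ¬ epsGt1 u n j)
    (hpure : IsPure ↥(PL n u v)) :
    (∀ A : Set ↥(PL n u v), IsMaxChain (· ≤ ·) A →
      (A.ncard : ℤ) = (v 1 - u 1) + (i1 : ℤ) - 1) ∧
    (∃ A : Set ↥(PL n u v), IsChain (· ≤ ·) A ∧
      (A.ncard : ℤ) = (v 1 - u 1) + (i1 : ℤ) - 1) ∧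
    (∀ A : Set ↥(PL n u v), IsChain (· ≤ ·) A →
      (A.ncard : ℤ) ≤ (v 1 - u 1) + (i1 : ℤ) - 1) := by
  have hu_self := eq_self_of_not_epsGt1 hu1 humono hi1n hi1min
  have hlt_self := self_lt_of_epsGt1 hu1 humono hi11 hi1e
  have := (finite_PL n u v).to_subtype
  have hmax := isMaxChain_ladderChainSet hn hu_self hlt_self huv hi11 hi1n
  have hcard : ((ladderChainSet n u v i1).ncard : ℤ) = (v 1 - u 1) + i1 - 1 := by
    have := huv 1 le_rfl hn
    rw [ncard_ladderChainSet hu_self huv hi11 hi1n]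
    omega
  refine ⟨fun A hA => hpure A _ hA hmax ▸ hcard, ⟨_, hmax.isChain, hcard⟩, fun A hA => ?_⟩
  rw [← hcard]
  exact_mod_cast hpure.ncard_le_of_isMaxChain hmax hA

theorem stmt18
    (n m : ℕ) (u v : ℕ → ℤ)
    (hn : 1 ≤ n) (hnm : n < m)
    (hu1 : u 1 = 1)
    (humono : ∀ i, 1 ≤ i → i + 1 ≤ n → u i < u (i + 1))
    (hum : u n < (m : ℤ))
    (hv1 : 1 < v 1)
    (hvmono : ∀ i, 1 ≤ i → i + 1 ≤ n → v i < v (i + 1))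
    (hvn : v n = (m : ℤ))
    (huv : ∀ i, 1 ≤ i → i ≤ n → u i < v i)
    (hstep : ∀ i, 1 ≤ i → i + 1 ≤ n → u (i + 1) ≤ v i + 1)
    (i1 : ℕ) (hi11 : 1 ≤ i1) (hi1n : i1 ≤ n) (hi1e : epsGt1 u n i1)
    (hi1min : ∀ j, 1 ≤ j → j < i1 → ¬ epsGt1 u n j)
    (hpure : IsPure ↥(PL n u v)) :
    (∀ A : Set ↥(PL n u v), IsMaxChain (· ≤ ·) A →
      (A.ncard : ℤ) = (v 1 - u 1) + (i1 : ℤ) - 1) ∧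
    (∃ A : Set ↥(PL n u v), IsChain (· ≤ ·) A ∧
      (A.ncard : ℤ) = (v 1 - u 1) + (i1 : ℤ) - 1) ∧
    (∀ A : Set ↥(PL n u v), IsChain (· ≤ ·) A →
      (A.ncard : ℤ) ≤ (v 1 - u 1) + (i1 : ℤ) - 1) :=
  stmt18_general n u v hn hu1 humono huv i1 hi11 hi1n hi1e hi1min hpure

end LadderPaper
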